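/- arXiv:1908.10491 — 3 statements merged into one kernel-verified Lean document; each statement's English description precedes it below -/
import Mathlib

section
/- Let n ≥ 4 and suppose the chordless cycle C_n has an IP-SEG model with exactly two interval arcs and exactly two permutation arcs. Then each of the two permutation arcs consists of at most two segments. -/
/-- A segment between the horizontal lines `L₁ = {y = 1}` and `L₂ = {y = 2}`,
given by its two endpoints, each of which lies on `L₁` or `L₂`. -/
structure IPSeg where
  p : ℝ × ℝ
  q : ℝ × ℝ
  hp : p.2 = 1 ∨ p.2 = 2
  hq : q.2 = 1 ∨ q.2 = 2

namespace IPSeg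

/-- The closed line segment in `ℝ²` determined by the two endpoints. -/
def carrier (s : IPSeg) : Set (ℝ × ℝ) := segment ℝ s.p s.q

/-- An interval segment: both endpoints on the same horizontal line. -/
def IsInterval (s : IPSeg) : Prop := s.p.2 = s.q.2

/-- A permutation segment: one endpoint on each horizontal line. -/
def IsPermutation (s : IPSeg) : Prop := s.p.2 ≠ s.q.2

/-- The (set of) endpoints of the segment. -/
def endpoints (s : IPSeg) : Set (ℝ × ℝ) := {s.p, s.q}

end IPSeg

/-- An IP-SEG model of a graph: distinct vertices are adjacent iff their segments meet. -/
def IsIPSEGModel {V : Type*} (G : SimpleGraph V) (s : V → IPSeg) : Prop :=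
  ∀ u v : V, u ≠ v → (G.Adj u v ↔ ((s u).carrier ∩ (s v).carrier).Nonempty)

/-- An IP-SEG* model: an IP-SEG model in which all interval segments lie on one line. -/
def IsIPSEGStarModel {V : Type*} (G : SimpleGraph V) (s : V → IPSeg) : Prop :=
  IsIPSEGModel G s ∧
    ∃ c : ℝ, (c = 1 ∨ c = 2) ∧ ∀ v : V, (s v).IsInterval → (s v).p.2 = c

/-- The chordless cycle `C_n` on vertex set `ZMod n`, with edges exactly
`v — v + 1` (indices modulo `n`). -/
def CycleGraph (n : ℕ) : SimpleGraph (ZMod n) :=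
  SimpleGraph.fromRel (fun u v => v = u + 1)

/-- `v` is the start of an interval arc: `v` is assigned an interval segment but its
cyclic predecessor is not. -/
def IntArcStart (n : ℕ) (s : ZMod n → IPSeg) (v : ZMod n) : Prop :=
  (s v).IsInterval ∧ ¬ (s (v - 1)).IsInterval

/-- The interval arc starting at `v` has length `l`: the `l` consecutive vertices
`v, v+1, …, v+l-1` carry interval segments and `v + l` does not. -/
def IntArcLen (n : ℕ) (s : ZMod n → IPSeg) (v : ZMod n) (l : ℕ) : Prop :=
  (∀ k : ℕ, k < l → (s (v + (k : ZMod n))).IsInterval) ∧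
    ¬ (s (v + (l : ZMod n))).IsInterval

/-- `v` is the start of a permutation arc. -/
def PermArcStart (n : ℕ) (s : ZMod n → IPSeg) (v : ZMod n) : Prop :=
  (s v).IsPermutation ∧ ¬ (s (v - 1)).IsPermutation

/-- The permutation arc starting at `v` has length `l`. -/
def PermArcLen (n : ℕ) (s : ZMod n → IPSeg) (v : ZMod n) (l : ℕ) : Prop :=
  (∀ k : ℕ, k < l → (s (v + (k : ZMod n))).IsPermutation) ∧
    ¬ (s (v + (l : ZMod n))).IsPermutation

/-!
Suppose the permutation arc starting at `v` has three segments `u₀, u₁, u₂` (at `v, v+1, v+2`).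
The other permutation arc then starts at some `v + k` with `4 ≤ k ≤ n - 2`; call its segment `x`.
A permutation segment cuts the strip `1 ≤ y ≤ 2` in two, so a connected set missing it lies on
one side of it. The path `v+3, …, v-1` misses `u₁`, so `x` lies, say, left of `u₁`; as `u₀`
and `u₂` cross `u₁` and miss `x`, the segment `x` is left of both of them as well. The path
`v+3, …, v-2` misses `u₀` and contains `x`, so it lies left of `u₀`, and then so does `u₂`,
which meets it. Symmetrically the path `v+4, …, v-1` puts `u₀` left of `u₂`, which is absurd.
-/

namespace IPSeg

open Set

/-- For a permutation segment, the abscissa of its endpoint on `L₁`. -/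
noncomputable def bot (s : IPSeg) : ℝ := if s.p.2 = 1 then s.p.1 else s.q.1

/-- For a permutation segment, the abscissa of its endpoint on `L₂`. -/
noncomputable def top (s : IPSeg) : ℝ := if s.p.2 = 1 then s.q.1 else s.p.1

theorem carrier_eq_segment_bot_top {s : IPSeg} (hs : s.IsPermutation) :
    s.carrier = segment ℝ (s.bot, 1) (s.top, 2) := by
  have hq := s.hq
  unfold IsPermutation at hs
  by_cases hp : s.p.2 = 1
  · have hq2 : s.q.2 = 2 := by grind
    simp only [carrier, bot, top, hp, if_true]
    rw [← hp, ← hq2]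
  · have hp2 : s.p.2 = 2 := by grind [s.hp]
    have hq1 : s.q.2 = 1 := by grind
    simp only [carrier, bot, top, hp, if_false]
    rw [segment_symm, ← hp2, ← hq1]

theorem carrier_subset_strip (s : IPSeg) : s.carrier ⊆ univ ×ˢ Icc (1 : ℝ) 2 := by
  have hmem : ∀ z : ℝ × ℝ, (z.2 = 1 ∨ z.2 = 2) → z ∈ univ ×ˢ Icc (1 : ℝ) 2 := by
    rintro z (h | h) <;> simp [h]
  exact (convex_univ.prod (convex_Icc 1 2)).segment_subset (hmem _ s.hp) (hmem _ s.hq)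

theorem isPreconnected_carrier (s : IPSeg) : IsPreconnected s.carrier :=
  (convex_segment _ _).isPreconnected

/-- Horizontal displacement of `z` from the line through the permutation segment `u`:
negative to the left of `u`, positive to the right. -/
noncomputable def offset (u : IPSeg) (z : ℝ × ℝ) : ℝ :=
  z.1 - ((2 - z.2) * u.bot + (z.2 - 1) * u.top)

theorem continuous_offset (u : IPSeg) : Continuous u.offset := by
  unfold offset; fun_prop

theorem offset_add {u : IPSeg} {a b : ℝ} (hab : a + b = 1) (x y : ℝ × ℝ) :
    u.offset (a • x + b • y) = a * u.offset x + b * u.offset y := by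
  simp only [offset, Prod.fst_add, Prod.snd_add, Prod.smul_fst, Prod.smul_snd, smul_eq_mul]
  linear_combination (2 * u.bot - u.top) * hab

theorem offset_bot (u w : IPSeg) : u.offset (w.bot, 1) = w.bot - u.bot := by
  simp only [offset]; ring

theorem offset_top (u w : IPSeg) : u.offset (w.top, 2) = w.top - u.top := by
  simp only [offset]; ring

theorem offset_eq_zero_of_mem {u : IPSeg} (hu : u.IsPermutation) {z : ℝ × ℝ}
    (hz : z ∈ u.carrier) : u.offset z = 0 := by
  rw [carrier_eq_segment_bot_top hu] at hz
  obtain ⟨a, b, -, -, hab, rfl⟩ := hz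
  rw [offset_add hab, offset_bot, offset_top]
  ring

theorem mem_carrier_of_offset_eq_zero {u : IPSeg} (hu : u.IsPermutation) {z : ℝ × ℝ}
    (hz : z ∈ univ ×ˢ Icc (1 : ℝ) 2) (h : u.offset z = 0) : z ∈ u.carrier := by
  obtain ⟨-, h1, h2⟩ := hz
  rw [carrier_eq_segment_bot_top hu]
  refine ⟨2 - z.2, z.2 - 1, by linarith, by linarith, by ring, ?_⟩
  ext
  · simp only [offset] at h
    simp only [Prod.fst_add, Prod.smul_fst, smul_eq_mul]
    linarith
  · simp only [Prod.snd_add, Prod.smul_snd, smul_eq_mul]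
    ring

/-- `S` lies strictly on side `ε` of `u`: the right side if `ε > 0`, the left if `ε < 0`. -/
def OnSide (u : IPSeg) (ε : ℝ) (S : Set (ℝ × ℝ)) : Prop :=
  ∀ z ∈ S, 0 < ε * u.offset z

theorem OnSide.mono {u : IPSeg} {ε : ℝ} {S T : Set (ℝ × ℝ)} (h : u.OnSide ε S) (hTS : T ⊆ S) :
    u.OnSide ε T :=
  fun z hz => h z (hTS hz)

theorem OnSide.disjoint {u : IPSeg} (hu : u.IsPermutation) {ε : ℝ} {S : Set (ℝ × ℝ)}
    (h : u.OnSide ε S) : Disjoint S u.carrier :=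
  disjoint_left.2 fun z hzS hzu => by
    simpa [offset_eq_zero_of_mem hu hzu] using h z hzS

theorem onSide_of_isPreconnected {u : IPSeg} (hu : u.IsPermutation) {S : Set (ℝ × ℝ)}
    (hS : IsPreconnected S) (hSs : S ⊆ univ ×ˢ Icc (1 : ℝ) 2) (hSu : Disjoint S u.carrier)
    {ε : ℝ} {z : ℝ × ℝ} (hz : z ∈ S) (hεz : 0 < ε * u.offset z) : u.OnSide ε S := by
  intro y hy
  by_contra! hεy
  obtain ⟨x, hxS, hx⟩ := hS.intermediate_value₂ hy hz
    ((continuous_const.mul u.continuous_offset).continuousOn) continuousOn_const hεy hεz.le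
  have hε : ε ≠ 0 := by rintro rfl; simp at hεz
  have hxu : x ∈ u.carrier :=
    mem_carrier_of_offset_eq_zero hu (hSs hxS) (by simpa [hε] using hx)
  exact disjoint_left.1 hSu hxS hxu

theorem onSide_segment_iff {u : IPSeg} {ε : ℝ} {x y : ℝ × ℝ} :
    u.OnSide ε (segment ℝ x y) ↔ 0 < ε * u.offset x ∧ 0 < ε * u.offset y := by
  refine ⟨fun h => ⟨h x (left_mem_segment ℝ x y), h y (right_mem_segment ℝ x y)⟩, ?_⟩
  rintro ⟨hx, hy⟩ z ⟨a, b, ha, hb, hab, rfl⟩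
  rw [offset_add hab]
  rcases ha.eq_or_lt with rfl | ha
  · rw [zero_add] at hab; subst hab; linarith
  · nlinarith [mul_nonneg hb hy.le]

theorem onSide_carrier_iff {u w : IPSeg} (hw : w.IsPermutation) {ε : ℝ} :
    u.OnSide ε w.carrier ↔ 0 < ε * (w.bot - u.bot) ∧ 0 < ε * (w.top - u.top) := by
  rw [carrier_eq_segment_bot_top hw, onSide_segment_iff, offset_bot, offset_top]

theorem OnSide.symm {u w : IPSeg} (hu : u.IsPermutation) (hw : w.IsPermutation) {ε : ℝ}
    (h : u.OnSide ε w.carrier) : w.OnSide (-ε) u.carrier := by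
  rw [onSide_carrier_iff hw] at h
  rw [onSide_carrier_iff hu]
  constructor <;> linarith [h.1, h.2]

theorem OnSide.trans {u w x : IPSeg} (hw : w.IsPermutation) (hx : x.IsPermutation) {ε : ℝ}
    (huw : u.OnSide ε w.carrier) (hwx : w.OnSide ε x.carrier) : u.OnSide ε x.carrier := by
  rw [onSide_carrier_iff hw] at huw
  rw [onSide_carrier_iff hx] at hwx ⊢
  constructor <;> linarith [huw.1, huw.2, hwx.1, hwx.2]

/-- Otherwise `w` would lie strictly beyond `x` as seen from `u`, hence miss `u`. -/
theorem OnSide.of_inter_nonempty {u w x : IPSeg} (hu : u.IsPermutation)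
    (hw : w.IsPermutation) (hx : x.IsPermutation) {ε : ℝ} (hux : u.OnSide ε x.carrier)
    (hxw : Disjoint x.carrier w.carrier) (huw : (u.carrier ∩ w.carrier).Nonempty) :
    w.OnSide ε x.carrier := by
  have hz : (x.bot, (1 : ℝ)) ∈ x.carrier := by
    rw [carrier_eq_segment_bot_top hx]; exact left_mem_segment ℝ _ _
  have hε : ε ≠ 0 := by rintro rfl; simpa using hux _ hz
  have hwz : w.offset (x.bot, 1) ≠ 0 := fun h =>
    disjoint_left.1 hxw hz (mem_carrier_of_offset_eq_zero hw (x.carrier_subset_strip hz) h)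
  have hxc := x.isPreconnected_carrier
  rcases (mul_ne_zero hε hwz).lt_or_gt with hneg | hpos
  · have hwx : w.OnSide (-ε) x.carrier :=
      onSide_of_isPreconnected hw hxc x.carrier_subset_strip hxw hz (by linarith)
    have huw' := hux.trans hx hw (by simpa using hwx.symm hw hx)
    exact absurd huw (not_nonempty_iff_eq_empty.2 (huw'.disjoint hu).symm.inter_eq)
  · exact onSide_of_isPreconnected hw hxc x.carrier_subset_strip hxw hz hpos

end IPSeg

theorem ZMod.natCast_ne_natCast_of_lt {n a b : ℕ} (hab : a < b) (hb : b < a + n) :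
    (a : ZMod n) ≠ b := by
  rw [ne_eq, ZMod.natCast_eq_natCast_iff, Nat.modEq_iff_dvd' hab.le]
  intro h
  have := Nat.le_of_dvd (by omega) h
  omega

namespace IsIPSEGModel

open Set IPSeg

variable {n : ℕ} {s : ZMod n → IPSeg}

theorem cycleGraph_inter_add_one_nonempty (hm : IsIPSEGModel (CycleGraph n) s) (hn : n ≠ 1)
    (u : ZMod n) : ((s u).carrier ∩ (s (u + 1)).carrier).Nonempty := by
  have hne : u ≠ u + 1 := fun h => hn (ZMod.one_eq_zero_iff.1 (by simpa using h.symm))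
  exact (hm u (u + 1) hne).1 (by simp [CycleGraph, hne])

theorem cycleGraph_disjoint (hm : IsIPSEGModel (CycleGraph n) s) (v : ZMod n) {i j : ℕ}
    (hij : i + 2 ≤ j) (hji : j + 2 ≤ i + n) :
    Disjoint (s (v + i)).carrier (s (v + j)).carrier := by
  have h₁ : (i : ZMod n) ≠ j := ZMod.natCast_ne_natCast_of_lt (by omega) (by omega)
  have h₂ : ((i + 1 : ℕ) : ZMod n) ≠ j := ZMod.natCast_ne_natCast_of_lt (by omega) (by omega)
  have h₃ : ((j + 1 : ℕ) : ZMod n) ≠ (i + n : ℕ) :=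
    ZMod.natCast_ne_natCast_of_lt (by omega) (by omega)
  push_cast [ZMod.natCast_self] at h₂ h₃
  rw [disjoint_iff_inter_eq_empty, ← not_nonempty_iff_eq_empty, ← hm _ _ (by simpa using h₁)]
  simp only [CycleGraph, SimpleGraph.fromRel_adj, ne_eq, add_right_inj, add_assoc]
  grind

theorem cycleGraph_isPreconnected_biUnion (hm : IsIPSEGModel (CycleGraph n) s) (hn : n ≠ 1)
    (v : ZMod n) (a b : ℕ) :
    IsPreconnected (⋃ i ∈ Icc a b, (s (v + i)).carrier) := by
  refine IsPreconnected.biUnion_of_chain ordConnected_Icc (fun i _ => isPreconnected_carrier _)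
    fun i _ _ => ?_
  simpa [add_assoc] using hm.cycleGraph_inter_add_one_nonempty hn (v + i)

theorem cycleGraph_not_isPermutation (hm : IsIPSEGModel (CycleGraph n) s) (v : ZMod n)
    (h₃ : ∀ i : ℕ, i < 3 → (s (v + i)).IsPermutation) {k : ℕ} (hk : 4 ≤ k) (hkn : k + 2 ≤ n) :
    ¬ (s (v + k)).IsPermutation := by
  intro hx
  set f : ℕ → IPSeg := fun i => s (v + i) with hf
  set C : ℕ → ℕ → Set (ℝ × ℝ) := fun a b => ⋃ i ∈ Icc a b, (f i).carrier
  have hn : n ≠ 1 := by omega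
  have meets (i : ℕ) : ((f i).carrier ∩ (f (i + 1)).carrier).Nonempty := by
    simpa [hf, add_assoc] using hm.cycleGraph_inter_add_one_nonempty hn (v + i)
  have hC_strip (a b : ℕ) : C a b ⊆ univ ×ˢ Icc (1 : ℝ) 2 :=
    iUnion₂_subset fun i _ => carrier_subset_strip _
  have hC_disj (a b j : ℕ) (hj : j + 2 ≤ a) (hb : b + 2 ≤ j + n) :
      Disjoint (C a b) (f j).carrier :=
    disjoint_iUnion₂_left.2 fun i ⟨hai, hib⟩ =>
      (hm.cycleGraph_disjoint v (i := j) (j := i) (by omega) (by omega)).symm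
  have hC_conn (a b : ℕ) : IsPreconnected (C a b) := hm.cycleGraph_isPreconnected_biUnion hn v a b
  have hC_mem {a b i : ℕ} (ha : a ≤ i) (hb : i ≤ b) : (f i).carrier ⊆ C a b :=
    subset_biUnion_of_mem (u := fun i => (f i).carrier) (show i ∈ Icc a b from ⟨ha, hb⟩)
  have disj {i j : ℕ} (hij : i + 2 ≤ j) (hji : j + 2 ≤ i + n) :
      Disjoint (f i).carrier (f j).carrier := hm.cycleGraph_disjoint v hij hji
  obtain ⟨h0, h1, h2⟩ : (f 0).IsPermutation ∧ (f 1).IsPermutation ∧ (f 2).IsPermutation :=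
    ⟨h₃ 0 (by norm_num), h₃ 1 (by norm_num), h₃ 2 (by norm_num)⟩
  have hz₀ : ((f k).bot, (1 : ℝ)) ∈ (f k).carrier := by
    rw [carrier_eq_segment_bot_top hx]; exact left_mem_segment ℝ _ _
  set ε := (f 1).offset ((f k).bot, 1)
  have hε : ε ≠ 0 := fun h => disjoint_left.1 (disj (i := 1) (j := k) (by omega) (by omega))
    (mem_carrier_of_offset_eq_zero h1 (carrier_subset_strip _ hz₀) h) hz₀
  have hx1 : (f 1).OnSide ε (f k).carrier :=
    (onSide_of_isPreconnected h1 (hC_conn 3 (n - 1)) (hC_strip _ _)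
      (hC_disj 3 (n - 1) 1 le_rfl (by omega)) (hC_mem (by omega) (by omega) hz₀)
      (mul_self_pos.2 hε)).mono (hC_mem (by omega) (by omega))
  have hx0 : (f 0).OnSide ε (f k).carrier :=
    hx1.of_inter_nonempty h1 h0 hx (disj (by omega) (by omega)).symm
      (by rw [inter_comm]; exact meets 0)
  have hx2 : (f 2).OnSide ε (f k).carrier :=
    hx1.of_inter_nonempty h1 h2 hx (disj (by omega) (by omega)).symm (meets 1)
  have h20 : (f 0).OnSide ε (f 2).carrier := by
    have hC0 : (f 0).OnSide ε (C 3 (n - 2)) :=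
      onSide_of_isPreconnected h0 (hC_conn _ _) (hC_strip _ _)
        (hC_disj _ _ 0 (by omega) (by omega)) (hC_mem (by omega) (by omega) hz₀) (hx0 _ hz₀)
    obtain ⟨z, hz2, hz3⟩ := meets 2
    exact onSide_of_isPreconnected h0 (isPreconnected_carrier _) (carrier_subset_strip _)
      (disj (by omega) (by omega)).symm hz2 (hC0 z (hC_mem (by omega) (by omega) hz3))
  have h02 : (f 2).OnSide ε (f 0).carrier := by
    have hC2 : (f 2).OnSide ε (C 4 (n - 1)) :=
      onSide_of_isPreconnected h2 (hC_conn _ _) (hC_strip _ _)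
        (hC_disj _ _ 2 (by omega) (by omega)) (hC_mem (by omega) (by omega) hz₀) (hx2 _ hz₀)
    obtain ⟨z, hzl, hz0⟩ := meets (n - 1)
    have hfn : f (n - 1 + 1) = f 0 := by
      simp only [hf, Nat.sub_add_cancel (by omega : 1 ≤ n), ZMod.natCast_self, Nat.cast_zero]
    rw [hfn] at hz0
    exact onSide_of_isPreconnected h2 (isPreconnected_carrier _) (carrier_subset_strip _)
      (disj (by omega) (by omega)) hz0 (hC2 z (hC_mem (by omega) (by omega) hzl))
  have hz : ((f 0).bot, (1 : ℝ)) ∈ (f 0).carrier := by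
    rw [carrier_eq_segment_bot_top h0]; exact left_mem_segment ℝ _ _
  linarith [h02 _ hz, h20.symm h0 h2 _ hz]

end IsIPSEGModel

theorem exists_isPermutation_of_permArcStart {n : ℕ} [NeZero n] {s : ZMod n → IPSeg}
    {v w : ZMod n} {l : ℕ} (hv : PermArcStart n s v) (hw : PermArcStart n s w) (hwv : w ≠ v)
    (hl : ∀ i : ℕ, i < l → (s (v + i)).IsPermutation) :
    ∃ k : ℕ, l < k ∧ k + 2 ≤ n ∧ (s (v + k)).IsPermutation := by
  set k := (w - v).val
  have hvk : v + k = w := by simp [k]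
  have hkn : k < n := ZMod.val_lt _
  have hk0 : k ≠ 0 := fun h => hwv (by simpa [h] using hvk.symm)
  refine ⟨k, ?_, ?_, hvk ▸ hw.1⟩
  · by_contra! hkl
    apply hw.2
    rw [← hvk, show (k : ZMod n) = ((k - 1 : ℕ) : ZMod n) + 1 by
      rw [Nat.cast_sub (by omega)]; ring, ← add_assoc, add_sub_cancel_right]
    exact hl _ (by omega)
  · by_contra! hk
    apply hv.2
    rw [show v - 1 = w by
      rw [← hvk, show k = n - 1 by omega, Nat.cast_sub (by omega), ZMod.natCast_self]; ring]
    exact hw.1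

theorem two_arc_cycle_model_short_perm_arcs_general (n : ℕ) (hn : 4 ≤ n)
    (s : ZMod n → IPSeg) (hm : IsIPSEGModel (CycleGraph n) s)
    (hperm2 : ∃ v w : ZMod n, v ≠ w ∧ PermArcStart n s v ∧ PermArcStart n s w ∧
      ∀ u : ZMod n, PermArcStart n s u → u = v ∨ u = w) :
    ∀ (v : ZMod n) (lp : ℕ), PermArcStart n s v → PermArcLen n s v lp → lp ≤ 2 := by
  intro v lp hv hlen
  by_contra! hlp
  have : NeZero n := ⟨by omega⟩
  obtain ⟨w, hw, hwv⟩ : ∃ w, PermArcStart n s w ∧ w ≠ v := by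
    obtain ⟨a, b, hab, ha, hb, -⟩ := hperm2
    by_cases hav : a = v
    · exact ⟨b, hb, hav ▸ hab.symm⟩
    · exact ⟨a, ha, hav⟩
  have h₃ : ∀ i : ℕ, i < 3 → (s (v + i)).IsPermutation := fun i hi => hlen.1 i (by omega)
  obtain ⟨k, hk, hkn, hkperm⟩ := exists_isPermutation_of_permArcStart hv hw hwv h₃
  exact hm.cycleGraph_not_isPermutation v h₃ (by omega) hkn hkperm

/-- If a chordless cycle `C_n` (`n ≥ 4`) has an IP-SEG model with exactly two interval
arcs and exactly two permutation arcs, then each permutation arc consists of at most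
two segments. -/
theorem two_arc_cycle_model_short_perm_arcs (n : ℕ) (hn : 4 ≤ n)
    (s : ZMod n → IPSeg) (hm : IsIPSEGModel (CycleGraph n) s)
    (hint2 : ∃ v w : ZMod n, v ≠ w ∧ IntArcStart n s v ∧ IntArcStart n s w ∧
      ∀ u : ZMod n, IntArcStart n s u → u = v ∨ u = w)
    (hperm2 : ∃ v w : ZMod n, v ≠ w ∧ PermArcStart n s v ∧ PermArcStart n s w ∧
      ∀ u : ZMod n, PermArcStart n s u → u = v ∨ u = w) :
    ∀ (v : ZMod n) (lp : ℕ), PermArcStart n s v → PermArcLen n s v lp → lp ≤ 2 :=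
  two_arc_cycle_model_short_perm_arcs_general n hn s hm hperm2
end

section
/- For every n ≥ 3, the chordless cycle C_n is an IP-SEG* graph. In particular, C₅ is an IP-SEG* graph, so the classes of IP-SEG* and IP-SEG graphs contain odd holes and are not contained in the class of perfect graphs. -/
/-!
Vertices `0, …, n - 3` become the chain of unit intervals `[i, i + 1]` on `L₁`, and the last
two vertices become the diagonals from `(n - 2, 1)` to `(0, 2)` and from `(0, 1)` to `(n - 2, 2)`.
A permutation segment meets `L₁` only in its foot, so each diagonal touches exactly the one
interval ending (resp. starting) at its foot, while the two diagonals cross at their common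
midpoint.
-/

lemma eq_of_mem_segment_of_snd_eq {E : Type*} [AddCommGroup E] [Module ℝ E] {p q z : E × ℝ}
    (hz : z ∈ segment ℝ p q) (hzp : z.2 = p.2) (hpq : p.2 ≠ q.2) : z = p := by
  obtain ⟨a, b, ha, hb, hab, rfl⟩ := hz
  obtain rfl : b = 0 := by
    have h2 : a * p.2 + b * q.2 = p.2 := by simpa using hzp
    have : b * (q.2 - p.2) = 0 := by linear_combination h2 - p.2 * hab
    exact (mul_eq_zero.1 this).resolve_right (sub_ne_zero.2 hpq.symm)
  simp [show a = 1 by linarith]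

namespace IPSeg

def interval₁ (a b : ℝ) : IPSeg := ⟨(a, 1), (b, 1), Or.inl rfl, Or.inl rfl⟩

def perm (a b : ℝ) : IPSeg := ⟨(a, 1), (b, 2), Or.inl rfl, Or.inr rfl⟩

lemma carrier_interval₁ {a b : ℝ} (hab : a ≤ b) :
    (interval₁ a b).carrier = (fun x => (x, (1 : ℝ))) '' Set.Icc a b := by
  rw [carrier, interval₁, ← segment_eq_Icc hab, Prod.image_mk_segment_left]

lemma interval₁_inter_interval₁_nonempty_iff {a b c d : ℝ} (hab : a ≤ b) (hcd : c ≤ d) :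
    ((interval₁ a b).carrier ∩ (interval₁ c d).carrier).Nonempty ↔ c ≤ b ∧ a ≤ d := by
  rw [carrier_interval₁ hab, carrier_interval₁ hcd,
    ← Set.image_inter (fun x y h => congrArg Prod.fst h), Set.image_nonempty,
    Set.Icc_inter_Icc, Set.nonempty_Icc, max_le_iff, le_min_iff, le_min_iff]
  tauto

lemma perm_inter_interval₁_nonempty_iff {a b c d : ℝ} (hcd : c ≤ d) :
    ((perm a b).carrier ∩ (interval₁ c d).carrier).Nonempty ↔ a ∈ Set.Icc c d := by
  rw [carrier_interval₁ hcd]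
  constructor
  · rintro ⟨z, hz, x, hx, rfl⟩
    obtain rfl : x = a :=
      congrArg Prod.fst (eq_of_mem_segment_of_snd_eq hz rfl (by norm_num [perm]))
    exact hx
  · exact fun ha => ⟨(a, 1), left_mem_segment ℝ _ _, a, ha, rfl⟩

lemma perm_inter_perm_swap_nonempty (a b : ℝ) :
    ((perm a b).carrier ∩ (perm b a).carrier).Nonempty := by
  have : midpoint ℝ ((a, 1) : ℝ × ℝ) (b, 2) = midpoint ℝ (b, 1) (a, 2) := by
    ext
    · simp only [midpoint_eq_smul_add, Prod.smul_fst, Prod.fst_add, smul_eq_mul, add_comm]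
    · rfl
  exact ⟨_, midpoint_mem_segment _ _, this ▸ midpoint_mem_segment _ _⟩

end IPSeg

noncomputable def cycleSeg (n i : ℕ) : IPSeg :=
  if i + 2 < n then IPSeg.interval₁ i (i + 1)
  else if i + 2 = n then IPSeg.perm (n - 2 : ℕ) 0
  else IPSeg.perm 0 (n - 2 : ℕ)

lemma cycleSeg_p_snd (n i : ℕ) : (cycleSeg n i).p.2 = 1 := by
  unfold cycleSeg; split_ifs <;> rfl

lemma cycleSeg_inter_nonempty_iff {n i j : ℕ} (hij : i < j) (hj : j < n) :
    ((cycleSeg n i).carrier ∩ (cycleSeg n j).carrier).Nonempty ↔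
      j = i + 1 ∨ (i = 0 ∧ j + 1 = n) := by
  have hi_le : (i : ℝ) ≤ i + 1 := by linarith
  rcases lt_trichotomy (j + 2) n with hj2 | hj2 | hj2
  · rw [cycleSeg, cycleSeg, if_pos (by omega), if_pos hj2,
      IPSeg.interval₁_inter_interval₁_nonempty_iff hi_le (by linarith)]
    norm_cast
    omega
  · rw [cycleSeg, cycleSeg, if_pos (by omega), if_neg (by omega), if_pos hj2, Set.inter_comm,
      IPSeg.perm_inter_interval₁_nonempty_iff hi_le, Set.mem_Icc]
    norm_cast
    omega
  · rcases (by omega : i + 2 < n ∨ i + 2 = n) with hi2 | hi2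
    · rw [cycleSeg, cycleSeg, if_pos hi2, if_neg (by omega), if_neg (by omega), Set.inter_comm,
        IPSeg.perm_inter_interval₁_nonempty_iff hi_le, Set.mem_Icc]
      norm_cast
      omega
    · rw [cycleSeg, cycleSeg, if_neg (by omega), if_pos hi2, if_neg (by omega), if_neg (by omega)]
      exact iff_of_true (IPSeg.perm_inter_perm_swap_nonempty _ _) (by omega)

lemma cycleGraph_adj_iff_of_val_lt {n : ℕ} [Fact (1 < n)] {u v : ZMod n} (h : u.val < v.val) :
    (CycleGraph n).Adj u v ↔ v.val = u.val + 1 ∨ (u.val = 0 ∧ v.val + 1 = n) := by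
  have hv := v.val_lt
  have hne : u ≠ v := fun huv => h.ne (congrArg ZMod.val huv)
  simp only [CycleGraph, SimpleGraph.fromRel_adj, ne_eq, hne, not_false_eq_true, true_and,
    ← (ZMod.val_injective n).eq_iff, ZMod.val_add, ZMod.val_one,
    Nat.mod_eq_of_lt (by omega : u.val + 1 < n)]
  rcases (by omega : v.val + 1 < n ∨ v.val + 1 = n) with hlt | heq
  · rw [Nat.mod_eq_of_lt hlt]; omega
  · rw [heq, Nat.mod_self]; omega

/-- For every `n ≥ 3`, the chordless cycle `C_n` is an IP-SEG* graph. (In particular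
`C₅` is one, so IP-SEG* and IP-SEG graphs contain odd holes and are not perfect.) -/
theorem cycle_is_ipsegstar (n : ℕ) (hn : 3 ≤ n) :
    ∃ s : ZMod n → IPSeg, IsIPSEGStarModel (CycleGraph n) s := by
  have : Fact (1 < n) := ⟨by omega⟩
  refine ⟨fun v => cycleSeg n v.val, ?_, 1, Or.inl rfl, fun v _ => cycleSeg_p_snd n v.val⟩
  intro u v huv
  rcases lt_or_gt_of_ne ((ZMod.val_injective n).ne huv) with h | h
  · rw [cycleGraph_adj_iff_of_val_lt h, cycleSeg_inter_nonempty_iff h v.val_lt]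
  · rw [SimpleGraph.adj_comm, Set.inter_comm, cycleGraph_adj_iff_of_val_lt h,
      cycleSeg_inter_nonempty_iff h u.val_lt]
end

section
/- Let p and q be two segments of an IP-SEG model in which no two distinct segments share an endpoint, with p ≠ q. Then p ∩ q = ∅ if and only if p is to the right of q or q is to the right of p. -/
/-- `RightOf p q` means the segment `p` is to the right of the segment `q`: for each
horizontal line, every endpoint of `p` on that line has strictly larger `x`-coordinate
than every endpoint of `q` on that line (vacuously true on a line where one of them has
no endpoint). -/
def RightOf (p q : IPSeg) : Prop :=
  ∀ c : ℝ, (c = 1 ∨ c = 2) →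
    ∀ e ∈ p.endpoints, ∀ f ∈ q.endpoints, e.2 = c → f.2 = c → f.1 < e.1

open Set AffineMap

/-!
After swapping the endpoints of a segment if necessary, every segment is either an interval
segment or a permutation segment running from `L₁` up to `L₂`, and the claim splits into three
cases. Two interval segments on different lines are disjoint and vacuously ordered, while on the
same line they are two intervals of `ℝ`. An interval segment on `Lᵢ` can meet a permutation
segment only in the latter's endpoint on `Lᵢ`. Two permutation segments, parametrised by height,
meet iff the difference of their `x`-coordinates, an affine function of the height, vanishes
somewhere in `[1, 2]`, i.e. iff `0` lies between its values on `L₁` and on `L₂`.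
-/

section

variable {α : Type*} [LinearOrder α]
variable {𝕜 : Type*} [Field 𝕜] [LinearOrder 𝕜] [IsStrictOrderedRing 𝕜]

lemma Set.notMem_uIcc_iff {x a b : α} : x ∉ uIcc a b ↔ x < min a b ∨ max a b < x := by
  simp only [uIcc, mem_Icc, not_and_or, not_le]

lemma Set.uIcc_inter_uIcc_eq_empty_iff {a b c d : α} :
    uIcc a b ∩ uIcc c d = ∅ ↔ max c d < min a b ∨ max a b < min c d := by
  simp only [uIcc, Icc_inter_Icc, Icc_eq_empty_iff, sup_le_iff, le_inf_iff, min_le_max, true_and,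
    and_true, not_and_or, not_le]
  tauto

lemma exists_lineMap_eq_lineMap_iff {a b c d : 𝕜} :
    (∃ t ∈ Icc (0 : 𝕜) 1, lineMap a b t = lineMap c d t) ↔ 0 ∈ uIcc (a - c) (b - d) := by
  rw [← segment_eq_uIcc, segment_eq_image_lineMap]
  refine exists_congr fun t => and_congr_right fun _ => ?_
  rw [← sub_eq_zero, ← vsub_eq_sub, lineMap_vsub_lineMap, vsub_eq_sub, vsub_eq_sub]

end

namespace IPSeg

lemma snd_eq_one_or_two_of_mem_endpoints {s : IPSeg} {e : ℝ × ℝ} (he : e ∈ s.endpoints) :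
    e.2 = 1 ∨ e.2 = 2 := by
  rcases he with rfl | rfl
  exacts [s.hp, s.hq]

lemma rightOf_iff {a b : IPSeg} :
    RightOf a b ↔ ∀ e ∈ a.endpoints, ∀ f ∈ b.endpoints, e.2 = f.2 → f.1 < e.1 := by
  constructor
  · intro h e he f hf hef
    exact h e.2 (snd_eq_one_or_two_of_mem_endpoints he) e he f hf rfl hef.symm
  · rintro h c - e he f hf rfl hf2
    exact h e he f hf hf2.symm

def swap (s : IPSeg) : IPSeg := ⟨s.q, s.p, s.hq, s.hp⟩

@[simp]
lemma carrier_swap (s : IPSeg) : s.swap.carrier = s.carrier := segment_symm ℝ s.q s.p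

@[simp]
lemma endpoints_swap (s : IPSeg) : s.swap.endpoints = s.endpoints := pair_comm s.q s.p

@[simp]
lemma rightOf_swap_left {a b : IPSeg} : RightOf a.swap b ↔ RightOf a b := by
  simp only [rightOf_iff, endpoints_swap]

@[simp]
lemma rightOf_swap_right {a b : IPSeg} : RightOf a b.swap ↔ RightOf a b := by
  simp only [rightOf_iff, endpoints_swap]

lemma snd_eq_one_and_two_of_lt {s : IPSeg} (h : s.p.2 < s.q.2) : s.p.2 = 1 ∧ s.q.2 = 2 := by
  rcases s.hp with hp | hp <;> rcases s.hq with hq | hq <;> constructor <;> linarith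

lemma carrier_eq_image_of_isInterval {s : IPSeg} (h : s.IsInterval) :
    s.carrier = (·, s.p.2) '' uIcc s.p.1 s.q.1 := by
  rw [carrier, ← segment_eq_uIcc, Prod.image_mk_segment_left]
  exact congrArg _ (Prod.ext rfl h.symm)

lemma mem_carrier_of_lt {s : IPSeg} (h : s.p.2 < s.q.2) {z : ℝ × ℝ} :
    z ∈ s.carrier ↔ z.2 ∈ Icc 1 2 ∧ z.1 = lineMap s.p.1 s.q.1 (z.2 - 1) := by
  obtain ⟨hp, hq⟩ := snd_eq_one_and_two_of_lt h
  have snd_lineMap_eq (t : ℝ) : (lineMap s.p s.q t).2 = t + 1 := by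
    rw [snd_lineMap, hp, hq, lineMap_apply_module, smul_eq_mul, smul_eq_mul]
    ring
  rw [carrier, segment_eq_image_lineMap]
  constructor
  · rintro ⟨t, ⟨ht0, ht1⟩, rfl⟩
    rw [snd_lineMap_eq, add_sub_cancel_right, fst_lineMap]
    exact ⟨⟨by linarith, by linarith⟩, rfl⟩
  · rintro ⟨⟨hz1, hz2⟩, hz⟩
    refine ⟨z.2 - 1, ⟨by linarith, by linarith⟩, Prod.ext ?_ ?_⟩
    · rw [fst_lineMap, hz]
    · rw [snd_lineMap_eq, sub_add_cancel]

lemma carrier_inter_eq_empty_iff_of_isInterval {a b : IPSeg} (ha : a.IsInterval)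
    (hb : b.IsInterval) : a.carrier ∩ b.carrier = ∅ ↔ RightOf a b ∨ RightOf b a := by
  unfold IsInterval at ha hb
  rw [carrier_eq_image_of_isInterval ha, carrier_eq_image_of_isInterval hb]
  by_cases hab : a.p.2 = b.p.2
  · rw [hab, ← image_inter (Prod.mk_left_injective _), image_eq_empty,
      uIcc_inter_uIcc_eq_empty_iff]
    simp [rightOf_iff, endpoints, ← ha, ← hb, hab]
  · refine iff_of_true ?_ (Or.inl ?_)
    · rw [eq_empty_iff_forall_notMem]
      rintro _ ⟨⟨x, -, rfl⟩, ⟨y, -, h⟩⟩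
      exact hab (congrArg Prod.snd h).symm
    · rw [rightOf_iff]
      rintro e (rfl | rfl) f (rfl | rfl) h <;> simp_all

lemma carrier_inter_eq_empty_iff_of_isInterval_of_lt {a b : IPSeg} (ha : a.IsInterval)
    (hb : b.p.2 < b.q.2) : a.carrier ∩ b.carrier = ∅ ↔ RightOf a b ∨ RightOf b a := by
  obtain ⟨hbp, hbq⟩ := snd_eq_one_and_two_of_lt hb
  have hmeet :
      a.carrier ∩ b.carrier = ∅ ↔ lineMap b.p.1 b.q.1 (a.p.2 - 1) ∉ uIcc a.p.1 a.q.1 := by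
    rw [carrier_eq_image_of_isInterval ha, eq_empty_iff_forall_notMem]
    constructor
    · intro hdisj hx
      have ha2 : a.p.2 ∈ Icc 1 2 := by rcases a.hp with h | h <;> norm_num [h]
      exact hdisj _ ⟨mem_image_of_mem _ hx, (mem_carrier_of_lt hb).2 ⟨ha2, rfl⟩⟩
    · rintro hx' _ ⟨⟨x, hx, rfl⟩, hxb⟩
      exact hx' (((mem_carrier_of_lt hb).1 hxb).2 ▸ hx)
  rw [hmeet, notMem_uIcc_iff]
  unfold IsInterval at ha
  rcases a.hp with h | h <;> norm_num [rightOf_iff, endpoints, h, ← ha, hbp, hbq]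

lemma carrier_inter_eq_empty_iff_of_lt {a b : IPSeg} (ha : a.p.2 < a.q.2)
    (hb : b.p.2 < b.q.2) : a.carrier ∩ b.carrier = ∅ ↔ RightOf a b ∨ RightOf b a := by
  obtain ⟨hap, haq⟩ := snd_eq_one_and_two_of_lt ha
  obtain ⟨hbp, hbq⟩ := snd_eq_one_and_two_of_lt hb
  have hmeet : (a.carrier ∩ b.carrier).Nonempty ↔
      ∃ t ∈ Icc (0 : ℝ) 1, lineMap a.p.1 a.q.1 t = lineMap b.p.1 b.q.1 t := by
    simp only [Set.Nonempty, mem_inter_iff, mem_carrier_of_lt ha, mem_carrier_of_lt hb]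
    constructor
    · rintro ⟨z, ⟨⟨hz1, hz2⟩, hza⟩, -, hzb⟩
      exact ⟨z.2 - 1, ⟨by linarith, by linarith⟩, hza.symm.trans hzb⟩
    · rintro ⟨t, ⟨ht0, ht1⟩, ht⟩
      have ht' : t + 1 ∈ Icc 1 2 := ⟨by linarith, by linarith⟩
      exact ⟨(lineMap a.p.1 a.q.1 t, t + 1), by simpa [ht']⟩
  rw [← not_nonempty_iff_eq_empty, hmeet, exists_lineMap_eq_lineMap_iff, notMem_uIcc_iff]
  simp [rightOf_iff, endpoints, hap, haq, hbp, hbq, sub_pos, sub_neg]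

theorem carrier_inter_eq_empty_iff (a b : IPSeg) :
    a.carrier ∩ b.carrier = ∅ ↔ RightOf a b ∨ RightOf b a := by
  wlog ha : a.p.2 ≤ a.q.2 generalizing a b
  · simpa using this a.swap b (le_of_not_ge ha)
  wlog hb : b.p.2 ≤ b.q.2 generalizing b
  · simpa using this b.swap (le_of_not_ge hb)
  rcases ha.eq_or_lt with ha | ha <;> rcases hb.eq_or_lt with hb | hb
  · exact carrier_inter_eq_empty_iff_of_isInterval ha hb
  · exact carrier_inter_eq_empty_iff_of_isInterval_of_lt ha hb
  · rw [inter_comm, or_comm]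
    exact carrier_inter_eq_empty_iff_of_isInterval_of_lt hb ha
  · exact carrier_inter_eq_empty_iff_of_lt ha hb

end IPSeg

theorem disjoint_iff_rightOf_general {V : Type} (s : V → IPSeg) (u v : V) :
    (s u).carrier ∩ (s v).carrier = ∅ ↔ RightOf (s u) (s v) ∨ RightOf (s v) (s u) :=
  IPSeg.carrier_inter_eq_empty_iff (s u) (s v)

/-- In an IP-SEG model in which no two segments of distinct vertices share an endpoint,
two segments of distinct vertices are disjoint iff one of them is to the right of
the other. -/
theorem disjoint_iff_rightOf {V : Type} (G : SimpleGraph V) (s : V → IPSeg)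
    (hm : IsIPSEGModel G s)
    (hshare : ∀ u v : V, u ≠ v → ∀ e ∈ (s u).endpoints, e ∉ (s v).endpoints)
    (u v : V) (huv : u ≠ v) :
    (s u).carrier ∩ (s v).carrier = ∅ ↔ RightOf (s u) (s v) ∨ RightOf (s v) (s u) :=
  disjoint_iff_rightOf_general s u v
end
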